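/- Let U ⊆ ℝ_t × ℝ²_x be open, let h be C¹ with h > 0 and v¹, v² be C² on U, and suppose they solve the 2D rotating shallow water system B h = −h div v, B v¹ = v² − ∂₁h, B v² = −v¹ − ∂₂h on U. Then the potential vorticity ξ = ζ + e^{−ρ} = (1 + ω) e^{−ρ}, where ρ = ln h, ω = ∂₁v² − ∂₂v¹ and ζ = ω e^{−ρ}, satisfies the homogeneous transport equation B ξ = 0 on U. -/

import Mathlib

/-!
Taking the curl of the momentum equations gives the vorticity equation
`B (1 + ω) = -(1 + ω) div v`, and the mass equation gives `B (1 / h) = div v / h`; the product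
rule for `B` then yields `B ξ = 0`. The curl step needs `∂₁∂₂h = ∂₂∂₁h` although `h` is only
assumed `C¹`: the momentum and mass equations express `∇h` through `C¹` quantities, so `h` is
in fact `C²`.
-/

/-- Partial derivative in the `i`-th coordinate direction of spacetime
`ℝ_t × ℝ²_x ≃ (Fin 3 → ℝ)`, coordinates `(x⁰, x¹, x²) = (t, x₁, x₂)`. -/
noncomputable def pd (i : Fin 3) (f : (Fin 3 → ℝ) → ℝ) (x : Fin 3 → ℝ) : ℝ :=
  fderiv ℝ f x (Pi.single i 1)

/-- Material derivative `B = ∂ₜ + v¹∂₁ + v²∂₂`. -/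
noncomputable def matD (v1 v2 f : (Fin 3 → ℝ) → ℝ) (x : Fin 3 → ℝ) : ℝ :=
  pd 0 f x + v1 x * pd 1 f x + v2 x * pd 2 f x

open Real Filter Topology

section PartialDerivative

variable {f g : (Fin 3 → ℝ) → ℝ} {x : Fin 3 → ℝ}

lemma pd_congr (hfg : f =ᶠ[𝓝 x] g) (i : Fin 3) : pd i f x = pd i g x := by
  rw [pd, pd, hfg.fderiv_eq]

lemma pd_const_add (c : ℝ) (i : Fin 3) : pd i (fun y => c + f y) x = pd i f x := by
  simp [pd, fderiv_const_add]

lemma pd_neg (i : Fin 3) : pd i (fun y => -f y) x = -pd i f x := by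
  simp [pd, fderiv_fun_neg]

lemma pd_add (hf : DifferentiableAt ℝ f x) (hg : DifferentiableAt ℝ g x) (i : Fin 3) :
    pd i (fun y => f y + g y) x = pd i f x + pd i g x := by
  simp [pd, fderiv_fun_add hf hg]

lemma pd_sub (hf : DifferentiableAt ℝ f x) (hg : DifferentiableAt ℝ g x) (i : Fin 3) :
    pd i (fun y => f y - g y) x = pd i f x - pd i g x := by
  simp [pd, fderiv_fun_sub hf hg]

lemma pd_mul (hf : DifferentiableAt ℝ f x) (hg : DifferentiableAt ℝ g x) (i : Fin 3) :
    pd i (fun y => f y * g y) x = pd i f x * g x + f x * pd i g x := by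
  simp only [pd, fderiv_fun_mul hf hg, add_apply, smul_apply, smul_eq_mul]
  ring

lemma pd_comp {φ : ℝ → ℝ} {φ' : ℝ} (hφ : HasDerivAt φ φ' (f x)) (hf : DifferentiableAt ℝ f x)
    (i : Fin 3) : pd i (fun y => φ (f y)) x = φ' * pd i f x := by
  have hcomp : HasFDerivAt (fun y => φ (f y)) (φ' • fderiv ℝ f x) x :=
    hφ.comp_hasFDerivAt x hf.hasFDerivAt
  simp [pd, hcomp.fderiv]

lemma fderiv_apply_eq_sum_pd (w : Fin 3 → ℝ) : fderiv ℝ f x w = ∑ i, w i * pd i f x := by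
  conv_lhs => rw [← Finset.univ_sum_single w]
  refine (map_sum _ _ _).trans (Finset.sum_congr rfl fun i _ => ?_)
  rw [pd, ← smul_eq_mul, ← map_smul, ← Pi.single_smul', smul_eq_mul, mul_one]

lemma differentiableAt_pd (hf : ContDiffAt ℝ 2 f x) (i : Fin 3) :
    DifferentiableAt ℝ (pd i f) x :=
  ((hf.fderiv_right le_rfl).differentiableAt one_ne_zero).clm_apply (differentiableAt_const _)

lemma pd_comm (hf : ContDiffAt ℝ 2 f x) (i j : Fin 3) : pd i (pd j f) x = pd j (pd i f) x := by
  have hdf : DifferentiableAt ℝ (fderiv ℝ f) x :=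
    (hf.fderiv_right le_rfl).differentiableAt one_ne_zero
  have hpd (k l : Fin 3) :
      pd k (pd l f) x = fderiv ℝ (fderiv ℝ f) x (Pi.single k 1) (Pi.single l 1) := by
    rw [pd, show pd l f = fun y => fderiv ℝ f y (Pi.single l 1) from rfl,
      fderiv_clm_apply hdf (differentiableAt_const _)]
    simp
  rw [hpd, hpd]
  exact hf.isSymmSndFDerivAt (by simp [minSmoothness_of_isRCLikeNormedField]) _ _

variable {U : Set (Fin 3 → ℝ)}

lemma ContDiffOn.pd {n : WithTop ℕ∞} (hf : ContDiffOn ℝ (n + 1) f U) (hU : IsOpen U)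
    (i : Fin 3) : ContDiffOn ℝ n (pd i f) U :=
  (hf.fderiv_of_isOpen hU le_rfl).clm_apply contDiffOn_const

lemma contDiffOn_succ_of_contDiffOn_pd {n : ℕ∞} (hU : IsOpen U) (hf : DifferentiableOn ℝ f U)
    (hpd : ∀ i, ContDiffOn ℝ n (pd i f) U) : ContDiffOn ℝ (n + 1) f U := by
  refine (contDiffOn_succ_iff_fderiv_of_isOpen hU).2 ⟨hf, by simp, ?_⟩
  refine contDiffOn_clm_apply.2 fun w => ?_
  simp_rw [fderiv_apply_eq_sum_pd]
  exact ContDiffOn.sum fun i _ => contDiffOn_const.mul (hpd i)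

end PartialDerivative

section MaterialDerivative

variable {v1 v2 f g : (Fin 3 → ℝ) → ℝ} {x : Fin 3 → ℝ}

lemma matD_const_add (c : ℝ) : matD v1 v2 (fun y => c + f y) x = matD v1 v2 f x := by
  simp only [matD, pd_const_add]

lemma matD_sub (hf : DifferentiableAt ℝ f x) (hg : DifferentiableAt ℝ g x) :
    matD v1 v2 (fun y => f y - g y) x = matD v1 v2 f x - matD v1 v2 g x := by
  simp only [matD, pd_sub hf hg]
  ring

lemma matD_mul (hf : DifferentiableAt ℝ f x) (hg : DifferentiableAt ℝ g x) :
    matD v1 v2 (fun y => f y * g y) x = matD v1 v2 f x * g x + f x * matD v1 v2 g x := by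
  simp only [matD, pd_mul hf hg]
  ring

lemma matD_comp {φ : ℝ → ℝ} {φ' : ℝ} (hφ : HasDerivAt φ φ' (f x))
    (hf : DifferentiableAt ℝ f x) : matD v1 v2 (fun y => φ (f y)) x = φ' * matD v1 v2 f x := by
  simp only [matD, pd_comp hφ hf]
  ring

lemma pd_matD (hf : ContDiffAt ℝ 2 f x) (hv1 : DifferentiableAt ℝ v1 x)
    (hv2 : DifferentiableAt ℝ v2 x) (i : Fin 3) :
    pd i (matD v1 v2 f) x
      = matD v1 v2 (pd i f) x + pd i v1 x * pd 1 f x + pd i v2 x * pd 2 f x := by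
  have hpd (j : Fin 3) := differentiableAt_pd hf j
  rw [show matD v1 v2 f = fun y => (pd 0 f y + v1 y * pd 1 f y) + v2 y * pd 2 f y from rfl,
    pd_add ((hpd 0).fun_add (hv1.fun_mul (hpd 1))) (hv2.fun_mul (hpd 2)),
    pd_add (hpd 0) (hv1.fun_mul (hpd 1)), pd_mul hv1 (hpd 1), pd_mul hv2 (hpd 2),
    pd_comm hf, pd_comm hf i 1, pd_comm hf i 2, matD]
  ring

lemma ContDiffOn.matD {U : Set (Fin 3 → ℝ)} {n : WithTop ℕ∞} (hv1 : ContDiffOn ℝ n v1 U)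
    (hv2 : ContDiffOn ℝ n v2 U) (hf : ContDiffOn ℝ (n + 1) f U) (hU : IsOpen U) :
    ContDiffOn ℝ n (matD v1 v2 f) U :=
  ((hf.pd hU 0).add (hv1.mul (hf.pd hU 1))).add (hv2.mul (hf.pd hU 2))

end MaterialDerivative

section ShallowWater

variable {h v1 v2 : (Fin 3 → ℝ) → ℝ}

lemma contDiffOn_two_of_shallowWater {U : Set (Fin 3 → ℝ)} (hU : IsOpen U)
    (hh : ContDiffOn ℝ 1 h U) (hv1 : ContDiffOn ℝ 2 v1 U) (hv2 : ContDiffOn ℝ 2 v2 U)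
    (hmass : ∀ x ∈ U, matD v1 v2 h x = -(h x) * (pd 1 v1 x + pd 2 v2 x))
    (hmom1 : ∀ x ∈ U, matD v1 v2 v1 x = v2 x - pd 1 h x)
    (hmom2 : ∀ x ∈ U, matD v1 v2 v2 x = -v1 x - pd 2 h x) :
    ContDiffOn ℝ 2 h U := by
  have hv1' : ContDiffOn ℝ 1 v1 U := hv1.of_le one_le_two
  have hv2' : ContDiffOn ℝ 1 v2 U := hv2.of_le one_le_two
  have hpd1 : ContDiffOn ℝ 1 (pd 1 h) U :=
    (hv2'.sub (hv1'.matD hv2' hv1 hU)).congr fun y hy => by linarith [hmom1 y hy]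
  have hpd2 : ContDiffOn ℝ 1 (pd 2 h) U :=
    (hv1'.neg.sub (hv1'.matD hv2' hv2 hU)).congr fun y hy => by linarith [hmom2 y hy]
  have hpd0 : ContDiffOn ℝ 1 (pd 0 h) U :=
    ((hh.neg.mul ((hv1.pd hU 1).add (hv2.pd hU 2))).sub (hv1'.mul hpd1)).sub
      (hv2'.mul hpd2) |>.congr fun y hy => by
        have hmass_y := hmass y hy
        rw [matD] at hmass_y
        linarith
  exact contDiffOn_succ_of_contDiffOn_pd (n := 1) hU (hh.differentiableOn one_ne_zero)
    (Fin.forall_fin_succ.2 ⟨hpd0, Fin.forall_fin_succ.2 ⟨hpd1, Fin.forall_fin_one.2 hpd2⟩⟩)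

lemma matD_one_add_vorticity {x : Fin 3 → ℝ} (hh : ContDiffAt ℝ 2 h x)
    (hv1 : ContDiffAt ℝ 2 v1 x) (hv2 : ContDiffAt ℝ 2 v2 x)
    (hmom1 : ∀ᶠ y in 𝓝 x, matD v1 v2 v1 y = v2 y - pd 1 h y)
    (hmom2 : ∀ᶠ y in 𝓝 x, matD v1 v2 v2 y = -v1 y - pd 2 h y) :
    matD v1 v2 (fun y => 1 + (pd 1 v2 y - pd 2 v1 y)) x
      = -(1 + (pd 1 v2 x - pd 2 v1 x)) * (pd 1 v1 x + pd 2 v2 x) := by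
  have dv1 : DifferentiableAt ℝ v1 x := hv1.differentiableAt two_ne_zero
  have dv2 : DifferentiableAt ℝ v2 x := hv2.differentiableAt two_ne_zero
  have curl : pd 1 (matD v1 v2 v2) x - pd 2 (matD v1 v2 v1) x = -(pd 1 v1 x + pd 2 v2 x) := by
    rw [pd_congr hmom2, pd_congr hmom1, pd_sub dv1.fun_neg (differentiableAt_pd hh 2), pd_neg,
      pd_sub dv2 (differentiableAt_pd hh 1), pd_comm hh 1 2]
    ring
  rw [matD_const_add, matD_sub (differentiableAt_pd hv2 1) (differentiableAt_pd hv1 2)]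
  linear_combination (pd_matD hv1 dv1 dv2 2) - (pd_matD hv2 dv1 dv2 1) + curl

lemma matD_exp_neg_log {x : Fin 3 → ℝ} (hh : DifferentiableAt ℝ h x) (hx : h x ≠ 0)
    (hmass : matD v1 v2 h x = -(h x) * (pd 1 v1 x + pd 2 v2 x)) :
    matD v1 v2 (fun y => exp (-log (h y))) x = exp (-log (h x)) * (pd 1 v1 x + pd 2 v2 x) := by
  have hφ : HasDerivAt (fun t => exp (-log t)) (exp (-log (h x)) * -(h x)⁻¹) (h x) :=
    (hasDerivAt_log hx).neg.exp
  rw [matD_comp hφ hh, hmass]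
  field_simp

end ShallowWater

/-- For a `C¹` positive height `h` and `C²` velocity `(v¹, v²)` solving the 2D rotating
shallow water system `B h = −h div v`, `B v¹ = v² − ∂₁h`, `B v² = −v¹ − ∂₂h` on an open
set `U`, the potential vorticity `ξ = ζ + e^{−ρ} = (1 + ω) e^{−ρ}` (with `ρ = ln h`,
`ω = ∂₁v² − ∂₂v¹`, `ζ = ω e^{−ρ}`) satisfies the homogeneous transport equation
`B ξ = 0` on `U`. -/
theorem potential_vorticity_transport
    (U : Set (Fin 3 → ℝ)) (hU : IsOpen U)
    (h v1 v2 : (Fin 3 → ℝ) → ℝ)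
    (hh : ContDiffOn ℝ 1 h U)
    (hv1 : ContDiffOn ℝ 2 v1 U) (hv2 : ContDiffOn ℝ 2 v2 U)
    (hpos : ∀ x ∈ U, 0 < h x)
    (hmass : ∀ x ∈ U, matD v1 v2 h x = -(h x) * (pd 1 v1 x + pd 2 v2 x))
    (hmom1 : ∀ x ∈ U, matD v1 v2 v1 x = v2 x - pd 1 h x)
    (hmom2 : ∀ x ∈ U, matD v1 v2 v2 x = -v1 x - pd 2 h x) :
    ∀ x ∈ U,
      matD v1 v2
        (fun y => (1 + (pd 1 v2 y - pd 2 v1 y)) * Real.exp (-(Real.log (h y)))) x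
        = 0 := by
  intro x hx
  have hUx : U ∈ 𝓝 x := hU.mem_nhds hx
  have hh2 : ContDiffAt ℝ 2 h x :=
    (contDiffOn_two_of_shallowWater hU hh hv1 hv2 hmass hmom1 hmom2).contDiffAt hUx
  have hv1x : ContDiffAt ℝ 2 v1 x := hv1.contDiffAt hUx
  have hv2x : ContDiffAt ℝ 2 v2 x := hv2.contDiffAt hUx
  have dh : DifferentiableAt ℝ h x := hh2.differentiableAt two_ne_zero
  have hx0 : h x ≠ 0 := (hpos x hx).ne'
  have dω : DifferentiableAt ℝ (fun y => 1 + (pd 1 v2 y - pd 2 v1 y)) x :=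
    ((differentiableAt_pd hv2x 1).fun_sub (differentiableAt_pd hv1x 2)).const_add 1
  rw [matD_mul dω (dh.log hx0).fun_neg.exp,
    matD_one_add_vorticity hh2 hv1x hv2x (eventually_of_mem hUx hmom1)
      (eventually_of_mem hUx hmom2),
    matD_exp_neg_log dh hx0 (hmass x hx)]
  ring
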